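/- Let p ≥ 1, let 0 ≤ δ < 1, let B ∈ ℝ^{p×p} satisfy ‖B‖₂ ≤ δ, set S := (1/12)·B·Bᵀ − (1/2)·I_p, and let C be a real p×p skew-symmetric matrix. If Γ ∈ ℝ^{p×p} solves the Sylvester equation S·Γ + Γ·S = C, then ‖Γ‖₂ ≤ (6/(6−δ²))·‖C‖₂. -/

import Mathlib

open Matrix

/-- Spectral norm: operator norm induced by the Euclidean vector norm. -/
noncomputable def specNorm {m n : Type*} [Fintype m] [Fintype n] [DecidableEq n]
    (M : Matrix m n ℝ) : ℝ :=
  ‖LinearMap.toContinuousLinearMap (Matrix.toEuclideanLin M)‖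

/-
Writing S = A - ½ with A = BBᵀ/12, the Sylvester equation says Γ = AΓ + ΓA - C. Hence
‖Γ‖ ≤ 2‖A‖‖Γ‖ + ‖C‖, and ‖A‖ = ‖B‖²/12 ≤ δ²/12 by the C*-identity, so (1 - δ²/6)‖Γ‖ ≤ ‖C‖.
-/

theorem norm_le_of_mul_add_mul_sub_self_eq {R : Type*} [SeminormedRing R] {a x c : R}
    (h : a * x + x * a - x = c) : (1 - 2 * ‖a‖) * ‖x‖ ≤ ‖c‖ := by
  have hx : x = a * x + x * a - c := by rw [← h]; abel
  have : ‖x‖ ≤ ‖a‖ * ‖x‖ + ‖x‖ * ‖a‖ + ‖c‖ :=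
    calc ‖x‖ = ‖a * x + x * a - c‖ := by rw [← hx]
      _ ≤ ‖a * x‖ + ‖x * a‖ + ‖c‖ := (norm_sub_le _ _).trans (by gcongr; exact norm_add_le _ _)
      _ ≤ ‖a‖ * ‖x‖ + ‖x‖ * ‖a‖ + ‖c‖ := by gcongr <;> exact norm_mul_le _ _
  linarith

namespace Matrix

open scoped Matrix.Norms.L2Operator

variable {m n : Type*} [Fintype m] [Fintype n] [DecidableEq n]

theorem specNorm_eq_l2_opNorm (M : Matrix m n ℝ) : specNorm M = ‖M‖ :=
  (l2_opNorm_def M).symm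

theorem l2_opNorm_mul_transpose_self [DecidableEq m] (B : Matrix m n ℝ) : ‖B * Bᵀ‖ = ‖B‖ ^ 2 := by
  have hBT : Bᵀᴴ = B := by rw [conjTranspose_eq_transpose_of_trivial, transpose_transpose]
  have hnorm : ‖Bᵀ‖ = ‖B‖ := by rw [← l2_opNorm_conjTranspose Bᵀ, hBT]
  simpa only [hBT, hnorm, sq] using l2_opNorm_conjTranspose_mul_self Bᵀ

end Matrix

open scoped Matrix.Norms.L2Operator in
theorem sylvester_solution_norm_bound_general (p : ℕ) (δ : ℝ)
    (hδ1 : δ < 1)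
    (B : Matrix (Fin p) (Fin p) ℝ) (hB : specNorm B ≤ δ)
    (S : Matrix (Fin p) (Fin p) ℝ)
    (hS : S = (1 / 12 : ℝ) • (B * Bᵀ) - (1 / 2 : ℝ) • (1 : Matrix (Fin p) (Fin p) ℝ))
    (C : Matrix (Fin p) (Fin p) ℝ)
    (Γ : Matrix (Fin p) (Fin p) ℝ) (hΓ : S * Γ + Γ * S = C) :
    specNorm Γ ≤ (6 / (6 - δ ^ 2)) * specNorm C := by
  set A := (1 / 12 : ℝ) • (B * Bᵀ)
  simp only [specNorm_eq_l2_opNorm] at hB ⊢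
  have hsyl : A * Γ + Γ * A - Γ = C := by
    rw [← hΓ, hS]
    noncomm_ring
    module
  have hA : ‖A‖ ≤ δ ^ 2 / 12 := by
    have hB2 : ‖B‖ ^ 2 ≤ δ ^ 2 := pow_le_pow_left₀ (norm_nonneg B) hB 2
    rw [norm_smul, l2_opNorm_mul_transpose_self, Real.norm_of_nonneg (by norm_num)]
    linarith
  have hδ0 : 0 ≤ δ := (norm_nonneg B).trans hB
  have hΓC := norm_le_of_mul_add_mul_sub_self_eq hsyl
  rw [div_mul_eq_mul_div, le_div_iff₀ (by nlinarith)]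
  nlinarith [norm_nonneg Γ]

theorem sylvester_solution_norm_bound (p : ℕ) (hp : 1 ≤ p) (δ : ℝ)
    (hδ0 : 0 ≤ δ) (hδ1 : δ < 1)
    (B : Matrix (Fin p) (Fin p) ℝ) (hB : specNorm B ≤ δ)
    (S : Matrix (Fin p) (Fin p) ℝ)
    (hS : S = (1 / 12 : ℝ) • (B * Bᵀ) - (1 / 2 : ℝ) • (1 : Matrix (Fin p) (Fin p) ℝ))
    (C : Matrix (Fin p) (Fin p) ℝ) (hC : Cᵀ = -C)
    (Γ : Matrix (Fin p) (Fin p) ℝ) (hΓ : S * Γ + Γ * S = C) :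
    specNorm Γ ≤ (6 / (6 - δ ^ 2)) * specNorm C :=
  sylvester_solution_norm_bound_general p δ hδ1 B hB S hS C Γ hΓ
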